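/- Let 𝒳 be a nonempty finite set, let p(x|x') be a strictly positive Markov kernel on 𝒳 with a strictly positive stationary distribution p(x), let q(x'|x) be a strictly positive Markov kernel on 𝒳 and let q₁ be a probability distribution on 𝒳. If there is δ > 0 such that KL(q(·|x) ‖ p^r(·|x)) ≥ δ for every x ∈ 𝒳, then the gap between the likelihood and the lower bound grows at least linearly in the chain length: L − L_B(n) ≥ n·δ for every n ≥ 1, where L = Σ_x q₁(x) log p(x), L_B(n) = Σ_x q_{n+1}(x) log p(x) + n Σ_{x,x'} q(x'|x) Q_n(x) [log p(x|x') − log q(x'|x)], and p^r(x'|x) = p(x|x') p(x') / p(x). -/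

import Mathlib

/-!
Write `D(x) = KL(q(·|x) ‖ p^r(·|x))`. Expanding `log p^r(x'|x) = log p(x|x') + log p(x') - log p(x)`
and using `q_{k+1} = q q_k`, the average `∑ₓ q_k(x) D(x)` equals `S_k - S_{k+1} - T_k` with
`S_k = ∑ₓ q_k(x) log p(x)` and `T_k = ∑ₓ q_k(x) ∑ₓ' q(x'|x) (log p(x|x') - log q(x'|x))`.
Summed over `k < n` this telescopes to `L - L_B(n)`, and each summand is at least `δ`
because `q_k` is a probability distribution.
-/

open Finset

/-- `qIter q q1 k` is the distribution `q_{k+1}` obtained from the data distribution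
`q₁ = qIter q q1 0` by `k` applications of the Markov kernel `q`,
where `q x x'` denotes `q(x | x')`, i.e. the transition probability from `x'` to `x`. -/
noncomputable def qIter {X : Type} [Fintype X] (q : X → X → ℝ) (q1 : X → ℝ) : ℕ → X → ℝ
  | 0 => q1
  | k + 1 => fun x => ∑ x' : X, q x x' * qIter q q1 k x'

/-- `Qavg q q1 n x = Q_n(x) = (1/n) ∑_{k=1}^n q_k(x)`. -/
noncomputable def Qavg {X : Type} [Fintype X] (q : X → X → ℝ) (q1 : X → ℝ) (n : ℕ) (x : X) : ℝ :=
  (1 / (n : ℝ)) * ∑ k ∈ Finset.range n, qIter q q1 k x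

open Real

/-- `reverseKernel p pd x' x` is the reverse kernel `p^r(x'|x) = p(x|x') p(x') / p(x)`. -/
noncomputable def reverseKernel {X : Type} (p : X → X → ℝ) (pd : X → ℝ) (x' x : X) : ℝ :=
  p x x' * pd x' / pd x

theorem log_reverseKernel {X : Type} {p : X → X → ℝ} {pd : X → ℝ}
    (hp : ∀ x x', 0 < p x x') (hpd : ∀ x, 0 < pd x) (x' x : X) :
    log (reverseKernel p pd x' x) = log (p x x') + log (pd x') - log (pd x) := by
  rw [reverseKernel, log_div (mul_pos (hp x x') (hpd x')).ne' (hpd x).ne',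
    log_mul (hp x x').ne' (hpd x').ne']

theorem le_sum_mul_of_forall_le {X : Type} [Fintype X] {μ D : X → ℝ} {δ : ℝ}
    (hμ : ∀ x, 0 ≤ μ x) (hμ_sum : ∑ x, μ x = 1) (hD : ∀ x, δ ≤ D x) :
    δ ≤ ∑ x, μ x * D x :=
  calc δ = ∑ x, μ x * δ := by rw [← sum_mul, hμ_sum, one_mul]
    _ ≤ ∑ x, μ x * D x := sum_le_sum fun x _ => mul_le_mul_of_nonneg_left (hD x) (hμ x)

section Iterates

variable {X : Type} [Fintype X] (q : X → X → ℝ) (q1 : X → ℝ)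

theorem sum_qIter_succ_mul (f : X → ℝ) (k : ℕ) :
    ∑ x, qIter q q1 (k + 1) x * f x = ∑ x, qIter q q1 k x * ∑ x', q x' x * f x' := by
  simp only [qIter, sum_mul, mul_sum]
  rw [sum_comm]
  exact sum_congr rfl fun _ _ => sum_congr rfl fun _ _ => by ring

theorem qIter_nonneg {q q1} (hq : ∀ x' x, 0 ≤ q x' x) (hq1 : ∀ x, 0 ≤ q1 x) (k : ℕ) (x : X) :
    0 ≤ qIter q q1 k x := by
  induction k generalizing x with
  | zero => exact hq1 x
  | succ k ih => exact sum_nonneg fun x' _ => mul_nonneg (hq x x') (ih x')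

theorem sum_qIter {q} (hq : ∀ x, ∑ x', q x' x = 1) (k : ℕ) :
    ∑ x, qIter q q1 k x = ∑ x, q1 x := by
  induction k with
  | zero => rfl
  | succ k ih =>
    have h := sum_qIter_succ_mul q q1 (fun _ => 1) k
    simp only [mul_one, hq] at h
    rw [h, ih]

theorem natCast_mul_Qavg (n : ℕ) (x : X) :
    (n : ℝ) * Qavg q q1 n x = ∑ k ∈ range n, qIter q q1 k x := by
  rcases n.eq_zero_or_pos with rfl | hn
  · simp
  · rw [Qavg, ← mul_assoc, mul_one_div_cancel (by positivity), one_mul]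

theorem sum_range_sum_qIter_mul (c : X → ℝ) (n : ℕ) :
    ∑ k ∈ range n, ∑ x, qIter q q1 k x * c x = (n : ℝ) * ∑ x, Qavg q q1 n x * c x := by
  simp only [mul_sum, ← mul_assoc, natCast_mul_Qavg, sum_mul]
  exact sum_comm

theorem sum_range_sum_qIter_mul_telescope (φ c : X → ℝ) (n : ℕ) :
    ∑ k ∈ range n, ∑ x, qIter q q1 k x * (φ x - ∑ x', q x' x * φ x' - c x) =
      ∑ x, q1 x * φ x - ∑ x, qIter q q1 n x * φ x - (n : ℝ) * ∑ x, Qavg q q1 n x * c x := by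
  have hstep : ∀ k, ∑ x, qIter q q1 k x * (φ x - ∑ x', q x' x * φ x' - c x) =
      ∑ x, qIter q q1 k x * φ x - ∑ x, qIter q q1 (k + 1) x * φ x
        - ∑ x, qIter q q1 k x * c x := by
    intro k
    simp only [sum_qIter_succ_mul, mul_sub, sum_sub_distrib]
  rw [sum_congr rfl fun k _ => hstep k, sum_sub_distrib,
    sum_range_sub' (fun k => ∑ x, qIter q q1 k x * φ x), sum_range_sum_qIter_mul]
  rfl

end Iterates

theorem likelihood_lower_bound_gap_grows_linearly_general
    {X : Type} [Fintype X]
    (p : X → X → ℝ) (pd : X → ℝ) (q : X → X → ℝ) (q1 : X → ℝ)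
    (hp_pos : ∀ x x' : X, 0 < p x x')
    (hpd_pos : ∀ x, 0 < pd x)
    (hq_pos : ∀ x' x : X, 0 < q x' x)
    (hq_kernel : ∀ x : X, ∑ x' : X, q x' x = 1)
    (hq1_nonneg : ∀ x, 0 ≤ q1 x)
    (hq1_sum : ∑ x : X, q1 x = 1)
    (n : ℕ)
    (δ : ℝ)
    (hKL : ∀ x : X, δ ≤ ∑ x' : X, q x' x * Real.log (q x' x / (p x x' * pd x' / pd x))) :
    (n : ℝ) * δ ≤
      (∑ x : X, q1 x * Real.log (pd x))
      - (∑ x : X, qIter q q1 n x * Real.log (pd x)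
          + (n : ℝ) * ∑ x : X, ∑ x' : X,
              q x' x * Qavg q q1 n x * (Real.log (p x x') - Real.log (q x' x))) := by
  set c : X → ℝ := fun x => ∑ x', q x' x * (log (p x x') - log (q x' x))
  have hKL_expand : ∀ x, ∑ x', q x' x * log (q x' x / reverseKernel p pd x' x) =
      log (pd x) - ∑ x', q x' x * log (pd x') - c x := by
    intro x
    rw [← one_mul (log (pd x)), ← hq_kernel x, sum_mul, ← sum_sub_distrib, ← sum_sub_distrib]
    refine sum_congr rfl fun x' _ => ?_
    have hpr : 0 < reverseKernel p pd x' x :=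
      div_pos (mul_pos (hp_pos x x') (hpd_pos x')) (hpd_pos x)
    rw [log_div (hq_pos x' x).ne' hpr.ne', log_reverseKernel hp_pos hpd_pos]
    ring
  have hcross : (n : ℝ) * ∑ x, ∑ x', q x' x * Qavg q q1 n x * (log (p x x') - log (q x' x)) =
      (n : ℝ) * ∑ x, Qavg q q1 n x * c x := by
    simp only [c, mul_sum]
    exact sum_congr rfl fun _ _ => sum_congr rfl fun _ _ => by ring
  rw [← sub_sub, hcross, ← sum_range_sum_qIter_mul_telescope]
  calc (n : ℝ) * δ = ∑ _k ∈ range n, δ := by simp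
    _ ≤ _ := sum_le_sum fun k _ => le_sum_mul_of_forall_le
      (qIter_nonneg (fun x' x => (hq_pos x' x).le) hq1_nonneg k)
      ((sum_qIter q1 hq_kernel k).trans hq1_sum) fun x => (hKL x).trans_eq (hKL_expand x)

/-- if the KL divergence from `q(·|x)` to the reverse kernel
`p^r(x'|x) = p(x|x') p(x') / p(x)` is at least `δ > 0` for every `x`, then the gap
between the likelihood and the lower bound grows at least linearly:
`L − L_B(n) ≥ n·δ` for every `n ≥ 1`. -/
theorem likelihood_lower_bound_gap_grows_linearly
    {X : Type} [Fintype X] [Nonempty X]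
    (p : X → X → ℝ) (pd : X → ℝ) (q : X → X → ℝ) (q1 : X → ℝ)
    (hp_pos : ∀ x x' : X, 0 < p x x')
    (hp_kernel : ∀ x' : X, ∑ x : X, p x x' = 1)
    (hpd_pos : ∀ x, 0 < pd x)
    (hpd_sum : ∑ x : X, pd x = 1)
    (hpd_stat : ∀ x, pd x = ∑ x' : X, p x x' * pd x')
    (hq_pos : ∀ x' x : X, 0 < q x' x)
    (hq_kernel : ∀ x : X, ∑ x' : X, q x' x = 1)
    (hq1_nonneg : ∀ x, 0 ≤ q1 x)
    (hq1_sum : ∑ x : X, q1 x = 1)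
    (n : ℕ) (hn : 1 ≤ n)
    (δ : ℝ) (hδ : 0 < δ)
    (hKL : ∀ x : X, δ ≤ ∑ x' : X, q x' x * Real.log (q x' x / (p x x' * pd x' / pd x))) :
    (n : ℝ) * δ ≤
      (∑ x : X, q1 x * Real.log (pd x))
      - (∑ x : X, qIter q q1 n x * Real.log (pd x)
          + (n : ℝ) * ∑ x : X, ∑ x' : X,
              q x' x * Qavg q q1 n x * (Real.log (p x x') - Real.log (q x' x))) :=
  likelihood_lower_bound_gap_grows_linearly_general p pd q q1 hp_pos hpd_pos hq_pos hq_kernel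
    hq1_nonneg hq1_sum n δ hKL
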